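/- For positive integers p, q: ∑_{1 ≤ k_1 < ⋯ < k_p} [k_1 k_2 ⋯ k_p]^{−1} k_p^{−q} = ∑_{1 ≤ ℓ_1 < ⋯ < ℓ_q} [ℓ_1 ℓ_2 ⋯ ℓ_q]^{−1} ℓ_q^{−p}, i.e. the Drinfel'd duality ζ({1}^{p−1}, q+1) = ζ({1}^{q−1}, p+1) in series form. -/

import Mathlib

/-!
Write `H r n = ∑_{0 < t₁ < ⋯ < t_r ≤ n} (t₁ ⋯ t_r)⁻¹` (`harmonicSum`) and
`K m n = m! n! / (m + n + 2)!` (`kernel`). Splitting off the largest index, the left-hand side is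
`∑_m H (p-1) m (m+1)^{-(q+1)}`. The identity `∑_n H r n K m n = (m + 1)^{-(r+2)}`, proved by
induction on `r` from the telescoping tails of `K m`, turns this into
`∑_{m,n} H (p-1) m H (q-1) n K m n`, which is symmetric under `(p, m) ↔ (q, n)` because `K` is.
Working in `ℝ≥0∞` makes every interchange of sums free.
-/

open Filter Topology Finset
open scoped Nat ENNReal NNReal

theorem ENNReal.tsum_eq_of_add_succ_eq {f d : ℕ → ℝ≥0∞} (h : ∀ i, f i + d (i + 1) = d i)
    (hd : Tendsto d atTop (𝓝 0)) : ∑' i, f i = d 0 := by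
  have partial_add : ∀ n, ∑ i ∈ range n, f i + d n = d 0 := by
    intro n
    induction n with
    | zero => simp
    | succ n ih => rw [sum_range_succ, add_assoc, h, ih]
  have := (ENNReal.tendsto_nat_tsum f).add hd
  simp only [partial_add, add_zero] at this
  exact (tendsto_nhds_unique tendsto_const_nhds this).symm

theorem Fin.strictMono_snoc {α : Type*} [Preorder α] {r : ℕ} {t : Fin r → α}
    (ht : StrictMono t) {a : α} (ha : ∀ i, t i < a) :
    StrictMono (Fin.snoc t a : Fin (r + 1) → α) := by
  intro i j hij
  induction j using Fin.lastCases with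
  | last =>
    obtain ⟨i, rfl⟩ := Fin.exists_castSucc_eq.2 hij.ne
    simpa using ha i
  | cast j =>
    obtain ⟨i, rfl⟩ := Fin.exists_castSucc_eq.2 (hij.trans (Fin.castSucc_lt_last j)).ne
    simpa using ht (Fin.castSucc_lt_castSucc_iff.1 hij)

namespace DrinfeldDuality

noncomputable def kernel (m n : ℕ) : ℝ≥0 := m ! * n ! / (m + n + 2)!

noncomputable def kernelTail (m n : ℕ) : ℝ≥0 := m ! * n ! / ((m + 1) * (m + n + 1)!)

lemma kernel_comm (m n : ℕ) : kernel m n = kernel n m := by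
  rw [kernel, kernel, mul_comm, add_comm m]

lemma kernel_add_kernelTail_succ (m n : ℕ) :
    kernel m n + kernelTail m (n + 1) = kernelTail m n := by
  rw [kernel, kernelTail, kernelTail, show m + (n + 1) + 1 = m + n + 2 by ring,
    show m + n + 2 = (m + n + 1) + 1 by ring, Nat.factorial_succ (m + n + 1), Nat.factorial_succ n]
  field_simp
  push_cast
  ring

lemma kernelTail_zero (m : ℕ) : kernelTail m 0 = ((m : ℝ≥0) + 1)⁻¹ ^ 2 := by
  rw [kernelTail, add_zero, Nat.factorial_succ]
  field_simp
  push_cast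
  ring

lemma kernelTail_succ (m n : ℕ) :
    kernelTail m (n + 1) = (n + 1) * kernel m n * ((m : ℝ≥0) + 1)⁻¹ := by
  rw [kernel, kernelTail, show m + (n + 1) + 1 = m + n + 2 by ring, Nat.factorial_succ n]
  field_simp
  push_cast
  ring

lemma kernelTail_le (m n : ℕ) : kernelTail m n ≤ 1 / ((n : ℝ≥0) + 1) := by
  have h : m ! * n ! * (n + 1) ≤ (m + 1) * (m + n + 1)! := by
    rw [mul_assoc, mul_comm (n !), ← Nat.factorial_succ, add_assoc]
    have := Nat.factorial_mul_factorial_dvd_factorial_add m (n + 1)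
    exact (Nat.le_of_dvd (Nat.factorial_pos _) this).trans (Nat.le_mul_of_pos_left _ m.succ_pos)
  rw [kernelTail]
  field_simp
  exact_mod_cast h

lemma tendsto_kernelTail (m : ℕ) : Tendsto (kernelTail m) atTop (𝓝 0) :=
  tendsto_of_tendsto_of_tendsto_of_le_of_le tendsto_const_nhds
    tendsto_one_div_add_atTop_nhds_zero_nat (fun _ ↦ zero_le) (kernelTail_le m)

lemma tsum_kernel_add (m j : ℕ) : ∑' i, (kernel m (i + j) : ℝ≥0∞) = kernelTail m j := by
  refine (ENNReal.tsum_eq_of_add_succ_eq (d := fun i ↦ (kernelTail m (i + j) : ℝ≥0∞))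
    (fun i ↦ ?_) ?_).trans (by rw [zero_add])
  · rw [add_right_comm, ← kernel_add_kernelTail_succ m (i + j), ENNReal.coe_add]
  · exact ENNReal.tendsto_coe.2 ((tendsto_kernelTail m).comp (tendsto_add_atTop_nat j))

lemma tsum_kernel (m : ℕ) : ∑' n, (kernel m n : ℝ≥0∞) = ((m : ℝ≥0∞) + 1)⁻¹ ^ 2 := by
  simpa [kernelTail_zero, ENNReal.coe_inv, ENNReal.inv_pow] using tsum_kernel_add m 0

lemma tsum_ite_lt_kernel (m j : ℕ) :
    ∑' n, (if j < n then (kernel m n : ℝ≥0∞) else 0) =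
      ((j : ℝ≥0∞) + 1) * kernel m j * ((m : ℝ≥0∞) + 1)⁻¹ := by
  have head : ∑ n ∈ range (j + 1), (if j < n then (kernel m n : ℝ≥0∞) else 0) = 0 :=
    sum_eq_zero fun n hn ↦ if_neg (by rw [mem_range] at hn; omega)
  rw [← Summable.sum_add_tsum_nat_add' (k := j + 1) ENNReal.summable, head, zero_add]
  simp [show ∀ i, j < i + (j + 1) by omega, tsum_kernel_add, kernelTail_succ, ENNReal.coe_inv]

abbrev Increasing (r : ℕ) := {k : Fin r → ℕ+ // StrictMono k}

def increasingSuccEquiv (r : ℕ) :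
    Increasing (r + 1) ≃ Σ j : ℕ, {t : Increasing r // ∀ i, (t.1 i : ℕ) ≤ j} where
  toFun k := ⟨(k.1 (Fin.last r)).natPred, ⟨Fin.init k.1, k.2.comp Fin.strictMono_castSucc⟩,
    fun i ↦ by
      have := PNat.coe_lt_coe _ _ |>.2 (k.2 (Fin.castSucc_lt_last i))
      simp only [Fin.init, PNat.natPred]
      omega⟩
  invFun x := ⟨Fin.snoc x.2.1.1 x.1.succPNat,
    Fin.strictMono_snoc x.2.1.2 fun i ↦ PNat.coe_lt_coe _ _ |>.1 (Nat.lt_succ_of_le (x.2.2 i))⟩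
  left_inv k := Subtype.ext (by simp [Fin.snoc_init_self])
  right_inv x := Sigma.subtype_ext (by simp) (Subtype.ext (by simp [Fin.init_snoc]))

noncomputable def harmonicSum (r n : ℕ) : ℝ≥0∞ :=
  ∑' t : {t : Increasing r // ∀ i, (t.1 i : ℕ) ≤ n}, ∏ i, ((t.1.1 i : ℕ) : ℝ≥0∞)⁻¹

lemma tsum_increasing_succ (r : ℕ) (f : ℕ → ℝ≥0∞) :
    ∑' k : Increasing (r + 1), (∏ i, ((k.1 i : ℕ) : ℝ≥0∞)⁻¹) * f (k.1 (Fin.last r)) =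
      ∑' j, harmonicSum r j * ((j : ℝ≥0∞) + 1)⁻¹ * f (j + 1) := by
  rw [← (increasingSuccEquiv r).symm.tsum_eq, ENNReal.tsum_sigma']
  refine tsum_congr fun j ↦ ?_
  rw [harmonicSum, ← ENNReal.tsum_mul_right, ← ENNReal.tsum_mul_right]
  refine tsum_congr fun t ↦ ?_
  simp [increasingSuccEquiv, Fin.prod_univ_castSucc]

lemma harmonicSum_zero_left (n : ℕ) : harmonicSum 0 n = 1 := by
  rw [harmonicSum, tsum_eq_single ⟨⟨Fin.elim0, fun i ↦ i.elim0⟩, fun i ↦ i.elim0⟩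
    fun t ht ↦ (ht (Subsingleton.elim _ _)).elim]
  simp

lemma harmonicSum_succ (r n : ℕ) :
    harmonicSum (r + 1) n = ∑' j, if j < n then harmonicSum r j * ((j : ℝ≥0∞) + 1)⁻¹ else 0 := by
  have bounded_iff (k : Increasing (r + 1)) :
      (∀ i, (k.1 i : ℕ) ≤ n) ↔ (k.1 (Fin.last r) : ℕ) ≤ n :=
    ⟨fun h ↦ h _, fun h i ↦ (PNat.coe_le_coe _ _ |>.2 (k.2.monotone (Fin.le_last i))).trans h⟩
  refine (tsum_subtype {k : Increasing (r + 1) | ∀ i, (k.1 i : ℕ) ≤ n}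
    fun k ↦ ∏ i, ((k.1 i : ℕ) : ℝ≥0∞)⁻¹).trans ?_
  have indicator_eq (k : Increasing (r + 1)) :
      Set.indicator {k | ∀ i, (k.1 i : ℕ) ≤ n} (fun k ↦ ∏ i, ((k.1 i : ℕ) : ℝ≥0∞)⁻¹) k =
        (∏ i, ((k.1 i : ℕ) : ℝ≥0∞)⁻¹) * if (k.1 (Fin.last r) : ℕ) ≤ n then 1 else 0 := by
    simp [Set.indicator_apply, bounded_iff]
  rw [tsum_congr indicator_eq, tsum_increasing_succ r fun x ↦ if x ≤ n then 1 else 0]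
  exact tsum_congr fun j ↦ by simp

lemma tsum_harmonicSum_mul_kernel (r m : ℕ) :
    ∑' n, harmonicSum r n * kernel m n = ((m : ℝ≥0∞) + 1)⁻¹ ^ (r + 2) := by
  induction r with
  | zero => simp [harmonicSum_zero_left, tsum_kernel]
  | succ r ih =>
    calc ∑' n, harmonicSum (r + 1) n * kernel m n
        = ∑' n, ∑' j,
            if j < n then harmonicSum r j * ((j : ℝ≥0∞) + 1)⁻¹ * kernel m n else 0 := by
          simp_rw [harmonicSum_succ, ← ENNReal.tsum_mul_right, ite_mul, zero_mul]
      _ = ∑' j, harmonicSum r j * ((j : ℝ≥0∞) + 1)⁻¹ *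
            ∑' n, if j < n then (kernel m n : ℝ≥0∞) else 0 := by
          rw [ENNReal.tsum_comm]
          simp_rw [← ENNReal.tsum_mul_left, mul_ite, mul_zero]
      _ = (∑' j, harmonicSum r j * kernel m j) * ((m : ℝ≥0∞) + 1)⁻¹ := by
          rw [← ENNReal.tsum_mul_right]
          refine tsum_congr fun j ↦ ?_
          rw [tsum_ite_lt_kernel, ← mul_assoc, mul_assoc (harmonicSum r j),
            ENNReal.inv_mul_cancel_left (by simp) (by simp)]
      _ = ((m : ℝ≥0∞) + 1)⁻¹ ^ (r + 1 + 2) := by rw [ih, ← pow_succ]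

lemma tsum_increasing_eq_tsum_tsum_kernel (r s : ℕ) :
    ∑' k : Increasing (r + 1),
        (∏ i, ((k.1 i : ℕ) : ℝ≥0∞)⁻¹) * ((k.1 (Fin.last r) : ℕ) : ℝ≥0∞)⁻¹ ^ (s + 1) =
      ∑' m, ∑' n, harmonicSum r m * harmonicSum s n * kernel m n := by
  rw [tsum_increasing_succ r fun x ↦ (x : ℝ≥0∞)⁻¹ ^ (s + 1)]
  refine tsum_congr fun m ↦ ?_
  rw [mul_assoc, Nat.cast_succ, ← pow_succ', ← tsum_harmonicSum_mul_kernel s m,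
    ← ENNReal.tsum_mul_left]
  simp_rw [mul_assoc]

lemma tsum_real_eq_toReal (r e : ℕ) (i₀ : Fin r) :
    ∑' k : Increasing r, (∏ i, (1 : ℝ) / ((k.1 i : ℕ) : ℝ)) * (1 / ((k.1 i₀ : ℕ) : ℝ) ^ e) =
      (∑' k : Increasing r,
        (∏ i, ((k.1 i : ℕ) : ℝ≥0∞)⁻¹) * ((k.1 i₀ : ℕ) : ℝ≥0∞)⁻¹ ^ e).toReal := by
  rw [ENNReal.tsum_toReal_eq fun k ↦ ENNReal.mul_ne_top (ENNReal.prod_ne_top fun i _ ↦ by simp)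
    (by simp)]
  refine tsum_congr fun k ↦ ?_
  simp [ENNReal.toReal_prod]

end DrinfeldDuality

open DrinfeldDuality in
/-- Drinfel'd duality in series form:
`∑_{1 ≤ k_1 < ⋯ < k_p} (k_1 ⋯ k_p)^{-1} k_p^{-q} = ∑_{1 ≤ ℓ_1 < ⋯ < ℓ_q} (ℓ_1 ⋯ ℓ_q)^{-1} ℓ_q^{-p}`. -/
theorem drinfeld_duality_series (p q : ℕ) (hp : 0 < p) (hq : 0 < q) :
    ∑' k : {k : Fin p → ℕ+ // StrictMono k},
      (∏ i, (1 : ℝ) / ((k.1 i : ℕ) : ℝ)) *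
        (1 / ((k.1 ⟨p - 1, by omega⟩ : ℕ) : ℝ) ^ q) =
    ∑' l : {l : Fin q → ℕ+ // StrictMono l},
      (∏ i, (1 : ℝ) / ((l.1 i : ℕ) : ℝ)) *
        (1 / ((l.1 ⟨q - 1, by omega⟩ : ℕ) : ℝ) ^ p) := by
  obtain ⟨P, rfl⟩ : ∃ P, p = P + 1 := ⟨p - 1, by omega⟩
  obtain ⟨Q, rfl⟩ : ∃ Q, q = Q + 1 := ⟨q - 1, by omega⟩
  rw [tsum_real_eq_toReal, tsum_real_eq_toReal]
  congr 1
  -- `⟨P + 1 - 1, _⟩` is `Fin.last P` up to definitional unfolding.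
  refine (tsum_increasing_eq_tsum_tsum_kernel P Q).trans
    (Eq.trans ?_ (tsum_increasing_eq_tsum_tsum_kernel Q P).symm)
  rw [ENNReal.tsum_comm]
  simp_rw [kernel_comm, mul_comm (harmonicSum P _)]
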